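/- Let 𝔾 be a Carnot group, Ω ⊆ 𝔾 open, and H : Ω × ℝ^m → ℝ satisfy (H). Then σ*(x,p) = sup{⟨−ξ,p⟩ : ξ ∈ Z(x)} is a sub-Finsler convex metric on the horizontal bundle HΩ: for each x ∈ Ω the map p ↦ σ*(x,p) is convex and positively 1-homogeneous and satisfies (1/α)|p| ≤ σ*(x,p) ≤ α|p|. Moreover, for each fixed v ∈ ℝ^m: (i) if H is upper semicontinuous on HΩ, then x ↦ σ*(x,v) is lower semicontinuous on Ω; (ii) if H is lower semicontinuous on HΩ, then x ↦ σ*(x,v) is upper semicontinuous on Ω. -/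

import Mathlib

open Filter Topology MeasureTheory Set
open scoped RealInnerProductSpace

noncomputable section

/-- Abbreviation for Euclidean space `ℝ^n`. -/
abbrev Euc (n : ℕ) := EuclideanSpace ℝ (Fin n)

/-- A (coordinatized) Carnot group of topological dimension `n`, rank `m` and step `k`,
identified with `ℝ^n` via exponential coordinates. -/
structure CarnotGroup (n m k : ℕ) where
  pos_m : 0 < m
  m_le_n : m ≤ n
  pos_k : 0 < k
  /-- the group law (in exponential coordinates) -/
  mul : Euc n → Euc n → Euc n
  mul_assoc' : ∀ x y z, mul (mul x y) z = mul x (mul y z)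
  zero_mul' : ∀ x, mul 0 x = x
  mul_zero' : ∀ x, mul x 0 = x
  /-- in exponential coordinates the group inverse is `-x` -/
  neg_mul_cancel : ∀ x, mul (-x) x = 0
  smooth_mul : ContDiff ℝ (⊤ : ℕ∞) (fun q : Euc n × Euc n => mul q.1 q.2)
  /-- the layer (weight) of each coordinate in the stratification -/
  w : Fin n → ℕ
  w_first_layer : ∀ j : Fin n, (j : ℕ) < m ↔ w j = 1
  w_bounds : ∀ j : Fin n, 1 ≤ w j ∧ w j ≤ k
  /-- intrinsic dilations `δ_λ` -/
  dil : ℝ → Euc n → Euc n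
  dil_apply : ∀ (lam : ℝ) (y : Euc n) (j : Fin n), dil lam y j = lam ^ w j * y j
  dil_mul : ∀ (lam : ℝ) (x y : Euc n), dil lam (mul x y) = mul (dil lam x) (dil lam y)
  /-- the generating horizontal vector fields `X₁, …, X_m` -/
  X : Fin m → Euc n → Euc n
  smooth_X : ∀ i, ContDiff ℝ (⊤ : ℕ∞) (X i)
  X_zero : ∀ i, X i 0 = EuclideanSpace.single (Fin.castLE m_le_n i) 1
  X_left_invariant : ∀ (g x : Euc n) (i : Fin m),
    X i (mul g x) = fderiv ℝ (mul g) x (X i x)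
  /-- Chow–Rashevskii connectivity: any two points of an open connected set are joined
  by a sub-unit horizontal curve inside the set. -/
  chow : ∀ S : Set (Euc n), IsOpen S → IsPreconnected S → ∀ x ∈ S, ∀ y ∈ S,
    ∃ (T : ℝ) (γ : ℝ → Euc n) (a : ℝ → Euc m),
      0 < T ∧ (∀ t ∈ Icc (0:ℝ) T, γ t ∈ S) ∧ ContinuousOn γ (Icc 0 T) ∧
      AEStronglyMeasurable a (volume.restrict (Icc (0:ℝ) T)) ∧
      (∀ᵐ t ∂(volume.restrict (Icc (0:ℝ) T)), ‖a t‖ ≤ 1) ∧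
      (∀ t ∈ Icc (0:ℝ) T, γ t = γ 0 + ∫ s in (0:ℝ)..t, ∑ i, a s i • X i (γ s)) ∧
      γ 0 = x ∧ γ T = y

/-- The sublevel set `Z(x) = {p : H(x,p) ≤ 0}` of a Hamiltonian. -/
def Zset {n m : ℕ} (H : Euc n → Euc m → ℝ) (x : Euc n) : Set (Euc m) := {p | H x p ≤ 0}

/-- The structural assumptions (H) for a Hamiltonian on `S × ℝ^m`, with constant `α`. -/
structure SatisfiesH {n m : ℕ} (S : Set (Euc n)) (H : Euc n → Euc m → ℝ) (α : ℝ) : Prop where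
  one_lt_alpha : 1 < α
  /-- (H1) Borel measurability of `H` on `S × ℝ^m` -/
  borel : Measurable ((S ×ˢ (univ : Set (Euc m))).restrict (fun q : Euc n × Euc m => H q.1 q.2))
  /-- (H2) -/
  closed : ∀ x ∈ S, IsClosed (Zset H x)
  convex : ∀ x ∈ S, Convex ℝ (Zset H x)
  frontier_eq : ∀ x ∈ S, frontier (Zset H x) = {p | H x p = 0}
  /-- (H3) -/
  ball_sub : ∀ x ∈ S, Metric.ball (0 : Euc m) (1/α) ⊆ Zset H x
  sub_ball : ∀ x ∈ S, Zset H x ⊆ Metric.ball (0 : Euc m) α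

/-- The support-function norm `σ*(x,p) = sup{⟨-ξ,p⟩ : ξ ∈ Z(x)}`. -/
def sigmaStar {n m : ℕ} (H : Euc n → Euc m → ℝ) (x : Euc n) (p : Euc m) : ℝ :=
  sSup ((fun ξ : Euc m => ⟪-ξ, p⟫) '' Zset H x)

/-- `K ∈ 𝒦(H,Ω)`: a Hamiltonian on all of `ℝ^n × ℝ^m` satisfying (H) and agreeing
with `H` on `Ω × ℝ^m`. -/
def ExtendsH {n m : ℕ} (Ω : Set (Euc n)) (H K : Euc n → Euc m → ℝ) : Prop :=
  (∃ α : ℝ, SatisfiesH (univ : Set (Euc n)) K α) ∧ ∀ x ∈ Ω, ∀ p, K x p = H x p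

/-- The length of a curve `γ : [0,T] → ℝ^n` with respect to a (possibly non-symmetric)
distance `d`, as a supremum over partitions. -/
def lengthVia {n : ℕ} (d : Euc n → Euc n → ℝ) (γ : ℝ → Euc n) (T : ℝ) : ℝ :=
  sSup {L | ∃ (s : ℕ) (t : Fin (s + 1) → ℝ), Monotone t ∧ t 0 = 0 ∧ t (Fin.last s) = T ∧
    L = ∑ j : Fin s, d (γ (t j.castSucc)) (γ (t j.succ))}

namespace CarnotGroup

variable {n m k : ℕ} (G : CarnotGroup n m k)

/-- `γ : [0,T] → S` is a horizontal curve with control `a` (the coordinates of its tangent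
vector with respect to `X₁,…,X_m`). -/
def IsHorizIn (S : Set (Euc n)) (T : ℝ) (γ : ℝ → Euc n) (a : ℝ → Euc m) : Prop :=
  0 < T ∧ (∀ t ∈ Icc (0:ℝ) T, γ t ∈ S) ∧ ContinuousOn γ (Icc 0 T) ∧
  AEStronglyMeasurable a (volume.restrict (Icc (0:ℝ) T)) ∧
  (∃ C : ℝ, ∀ᵐ t ∂(volume.restrict (Icc (0:ℝ) T)), ‖a t‖ ≤ C) ∧
  (∀ t ∈ Icc (0:ℝ) T, γ t = γ 0 + ∫ s in (0:ℝ)..t, ∑ i, a s i • G.X i (γ s))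

/-- Sub-unit horizontal curve: `‖a(t)‖ ≤ 1` a.e. -/
def IsSubunitIn (S : Set (Euc n)) (T : ℝ) (γ : ℝ → Euc n) (a : ℝ → Euc m) : Prop :=
  G.IsHorizIn S T γ a ∧ ∀ᵐ t ∂(volume.restrict (Icc (0:ℝ) T)), ‖a t‖ ≤ 1

/-- The Carnot–Carathéodory distance associated to the set `S` (for `S = univ` this is
the global distance `d_𝔾`). -/
def ccDist (S : Set (Euc n)) (x y : Euc n) : ℝ :=
  sInf {L | ∃ T γ a, G.IsSubunitIn S T γ a ∧ γ 0 = x ∧ γ T = y ∧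
    L = ∫ t in (0:ℝ)..T, ‖a t‖}

/-- The optical length function `d_{σ*}` associated to a Hamiltonian `H`, with curves in `S`. -/
def optDist (S : Set (Euc n)) (H : Euc n → Euc m → ℝ) (x y : Euc n) : ℝ :=
  sInf {L | ∃ T γ a, G.IsHorizIn S T γ a ∧ γ 0 = x ∧ γ T = y ∧
    L = ∫ t in (0:ℝ)..T, sigmaStar H (γ t) (a t)}

/-- Monge subsolution property relative to a given optical length function `d`. -/
def MongeSubVia (Ω : Set (Euc n)) (d : Euc n → Euc n → ℝ) (u : Euc n → ℝ) : Prop :=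
  ∀ x₀ ∈ Ω, 0 ≤ liminf (fun x => (u x - u x₀ + d x₀ x) / G.ccDist Ω x₀ x) (𝓝[Ω \ {x₀}] x₀)

/-- Monge supersolution property relative to a given optical length function `d`. -/
def MongeSupVia (Ω : Set (Euc n)) (d : Euc n → Euc n → ℝ) (u : Euc n → ℝ) : Prop :=
  ∀ x₀ ∈ Ω, liminf (fun x => (u x - u x₀ + d x₀ x) / G.ccDist Ω x₀ x) (𝓝[Ω \ {x₀}] x₀) ≤ 0

/-- Monge solution property relative to a given optical length function `d`. -/
def MongeSolVia (Ω : Set (Euc n)) (d : Euc n → Euc n → ℝ) (u : Euc n → ℝ) : Prop :=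
  ∀ x₀ ∈ Ω, liminf (fun x => (u x - u x₀ + d x₀ x) / G.ccDist Ω x₀ x) (𝓝[Ω \ {x₀}] x₀) = 0

/-- `u` is a Monge subsolution to `H(x, Xu) = 0` in `Ω`. -/
def MongeSub (Ω : Set (Euc n)) (H : Euc n → Euc m → ℝ) (u : Euc n → ℝ) : Prop :=
  G.MongeSubVia Ω (G.optDist Ω H) u

/-- `u` is a Monge supersolution to `H(x, Xu) = 0` in `Ω`. -/
def MongeSup (Ω : Set (Euc n)) (H : Euc n → Euc m → ℝ) (u : Euc n → ℝ) : Prop :=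
  G.MongeSupVia Ω (G.optDist Ω H) u

/-- `u` is a Monge solution to `H(x, Xu) = 0` in `Ω`. -/
def MongeSol (Ω : Set (Euc n)) (H : Euc n → Euc m → ℝ) (u : Euc n → ℝ) : Prop :=
  G.MongeSolVia Ω (G.optDist Ω H) u

/-- `ψ ∈ C¹_X(Ω)` with horizontal gradient `Xψ`: both are continuous on `Ω` and `Xψ` is
the derivative of `ψ` along the horizontal directions. -/
def IsC1X (Ω : Set (Euc n)) (ψ : Euc n → ℝ) (Xψ : Euc n → Euc m) : Prop :=
  ContinuousOn ψ Ω ∧ ContinuousOn Xψ Ω ∧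
  ∀ x ∈ Ω, ∀ i : Fin m, HasDerivAt (fun t : ℝ => ψ (x + t • G.X i x)) (Xψ x i) 0

/-- `u` is a viscosity subsolution to `H(x, Xu) = 0` in `Ω`. -/
def ViscSub (Ω : Set (Euc n)) (H : Euc n → Euc m → ℝ) (u : Euc n → ℝ) : Prop :=
  ∀ x₀ ∈ Ω, ∀ ψ Xψ, G.IsC1X Ω ψ Xψ →
    IsLocalMaxOn (fun x => u x - ψ x) Ω x₀ → H x₀ (Xψ x₀) ≤ 0

/-- `u` is a viscosity supersolution to `H(x, Xu) = 0` in `Ω`. -/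
def ViscSup (Ω : Set (Euc n)) (H : Euc n → Euc m → ℝ) (u : Euc n → ℝ) : Prop :=
  ∀ x₀ ∈ Ω, ∀ ψ Xψ, G.IsC1X Ω ψ Xψ →
    IsLocalMinOn (fun x => u x - ψ x) Ω x₀ → 0 ≤ H x₀ (Xψ x₀)

/-- Projection on the first-layer coordinates, `π(y) = (y₁,…,y_m)`. -/
def pi1 (y : Euc n) : Euc m := WithLp.toLp 2 (fun i => y (Fin.castLE G.m_le_n i))

/-- The first order superjet `∂⁺_X u(x₀)`. -/
def superjet (Ω : Set (Euc n)) (u : Euc n → ℝ) (x₀ : Euc n) : Set (Euc m) :=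
  {v | limsup (fun x => (u x - u x₀ - ⟪v, G.pi1 (G.mul (-x₀) x)⟫) / G.ccDist Ω x₀ x)
      (𝓝[Ω \ {x₀}] x₀) ≤ 0}

/-- The first order subjet `∂⁻_X u(x₀)`. -/
def subjet (Ω : Set (Euc n)) (u : Euc n → ℝ) (x₀ : Euc n) : Set (Euc m) :=
  {v | 0 ≤ liminf (fun x => (u x - u x₀ - ⟪v, G.pi1 (G.mul (-x₀) x)⟫) / G.ccDist Ω x₀ x)
      (𝓝[Ω \ {x₀}] x₀)}

/-- `u` is a jet subsolution to `H(x, Xu) = 0` in `Ω`. -/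
def JetSub (Ω : Set (Euc n)) (H : Euc n → Euc m → ℝ) (u : Euc n → ℝ) : Prop :=
  ∀ x₀ ∈ Ω, ∀ v ∈ G.superjet Ω u x₀, H x₀ v ≤ 0

/-- `u` is a jet supersolution to `H(x, Xu) = 0` in `Ω`. -/
def JetSup (Ω : Set (Euc n)) (H : Euc n → Euc m → ℝ) (u : Euc n → ℝ) : Prop :=
  ∀ x₀ ∈ Ω, ∀ v ∈ G.subjet Ω u x₀, 0 ≤ H x₀ v

/-- `u ∈ W^{1,∞}_{X,loc}(Ω)`, i.e. `u` is locally Lipschitz with respect to the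
Carnot–Carathéodory distance `d_Ω`. -/
def LocLipCC (Ω : Set (Euc n)) (u : Euc n → ℝ) : Prop :=
  ∀ x ∈ Ω, ∃ ε > (0:ℝ), ∃ C : ℝ, ∀ y ∈ Ω, ∀ z ∈ Ω,
    G.ccDist Ω x y < ε → G.ccDist Ω x z < ε → |u y - u z| ≤ C * G.ccDist Ω y z

/-- The homogeneous (Korányi-type) norm `‖y‖ = (Σ_j |y^{(j)}|^{2k!/j})^{1/(2k!)}`. -/
def koranyiNorm (y : Euc n) : ℝ :=
  (∑ j ∈ Finset.Icc 1 k,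
      (Real.sqrt (∑ i ∈ Finset.univ.filter (fun i : Fin n => G.w i = j), (y i) ^ 2)) ^
        ((2 * (Nat.factorial k) : ℝ) / j)) ^ ((1 : ℝ) / (2 * Nat.factorial k))

/-- The Korányi gauge distance `𝔡(x,y) = ‖x⁻¹ · y‖`. -/
def koranyiDist (x y : Euc n) : ℝ := G.koranyiNorm (G.mul (-x) y)

end CarnotGroup
section sigmaHelpers

variable {n m : ℕ} {Ω : Set (Euc n)} {H : Euc n → Euc m → ℝ} {α : ℝ}

lemma SatisfiesH.alpha_pos (hH : SatisfiesH Ω H α) : 0 < α :=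
  lt_trans one_pos hH.one_lt_alpha

lemma zero_mem_Zset (hH : SatisfiesH Ω H α) {x : Euc n} (hx : x ∈ Ω) :
    (0 : Euc m) ∈ Zset H x := by
  have hα : 0 < α := hH.alpha_pos
  exact hH.ball_sub x hx (Metric.mem_ball_self (by positivity))

lemma Zset_nonempty (hH : SatisfiesH Ω H α) {x : Euc n} (hx : x ∈ Ω) :
    (Zset H x).Nonempty := ⟨0, zero_mem_Zset hH hx⟩

lemma norm_lt_of_mem_Zset (hH : SatisfiesH Ω H α) {x : Euc n} (hx : x ∈ Ω)
    {ξ : Euc m} (hξ : ξ ∈ Zset H x) : ‖ξ‖ < α := by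
  have := hH.sub_ball x hx hξ
  simpa [Metric.mem_ball, dist_zero_right] using this

lemma bddAbove_sigma (hH : SatisfiesH Ω H α) {x : Euc n} (hx : x ∈ Ω) (p : Euc m) :
    BddAbove ((fun ξ : Euc m => ⟪-ξ, p⟫) '' Zset H x) := by
  refine ⟨α * ‖p‖, ?_⟩
  rintro _ ⟨ξ, hξ, rfl⟩
  calc ⟪-ξ, p⟫ ≤ ‖-ξ‖ * ‖p‖ := real_inner_le_norm _ _
    _ = ‖ξ‖ * ‖p‖ := by rw [norm_neg]
    _ ≤ α * ‖p‖ :=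
      mul_le_mul_of_nonneg_right (norm_lt_of_mem_Zset hH hx hξ).le (norm_nonneg _)

lemma le_sigmaStar (hH : SatisfiesH Ω H α) {x : Euc n} (hx : x ∈ Ω)
    {ξ : Euc m} (hξ : ξ ∈ Zset H x) (p : Euc m) : ⟪-ξ, p⟫ ≤ sigmaStar H x p :=
  le_csSup (bddAbove_sigma hH hx p) ⟨ξ, hξ, rfl⟩

lemma sigmaStar_le (hH : SatisfiesH Ω H α) {x : Euc n} (hx : x ∈ Ω) {p : Euc m}
    {c : ℝ} (hc : ∀ ξ ∈ Zset H x, ⟪-ξ, p⟫ ≤ c) : sigmaStar H x p ≤ c := by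
  refine csSup_le ((Zset_nonempty hH hx).image _) ?_
  rintro _ ⟨ξ, hξ, rfl⟩
  exact hc ξ hξ

lemma sigmaStar_nonneg (hH : SatisfiesH Ω H α) {x : Euc n} (hx : x ∈ Ω) (p : Euc m) :
    0 ≤ sigmaStar H x p := by
  have := le_sigmaStar hH hx (zero_mem_Zset hH hx) p
  simpa using this

lemma sigmaStar_le_alpha (hH : SatisfiesH Ω H α) {x : Euc n} (hx : x ∈ Ω) (p : Euc m) :
    sigmaStar H x p ≤ α * ‖p‖ := by
  refine sigmaStar_le hH hx fun ξ hξ => ?_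
  calc ⟪-ξ, p⟫ ≤ ‖-ξ‖ * ‖p‖ := real_inner_le_norm _ _
    _ = ‖ξ‖ * ‖p‖ := by rw [norm_neg]
    _ ≤ α * ‖p‖ :=
      mul_le_mul_of_nonneg_right (norm_lt_of_mem_Zset hH hx hξ).le (norm_nonneg _)

lemma alpha_le_sigmaStar (hH : SatisfiesH Ω H α) {x : Euc n} (hx : x ∈ Ω) (p : Euc m) :
    (1/α) * ‖p‖ ≤ sigmaStar H x p := by
  have hα : 0 < α := hH.alpha_pos
  rcases eq_or_ne p 0 with rfl | hp
  · simpa using sigmaStar_nonneg hH hx 0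
  · have hpn : 0 < ‖p‖ := norm_pos_iff.2 hp
    set ξ : Euc m := -((1 / (α * ‖p‖)) • p) with hξdef
    have hξmem : ξ ∈ Zset H x := by
      have hball : ξ ∈ Metric.closedBall (0 : Euc m) (1/α) := by
        rw [Metric.mem_closedBall, dist_zero_right, hξdef, norm_neg, norm_smul,
          Real.norm_eq_abs, abs_of_pos (by positivity)]
        rw [one_div, mul_inv, mul_assoc, inv_mul_cancel₀ hpn.ne', mul_one, one_div]
      have hcl : Metric.closedBall (0 : Euc m) (1/α) ⊆ Zset H x := by
        rw [← closure_ball (0 : Euc m) (by positivity : (1/α : ℝ) ≠ 0)]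
        calc closure (Metric.ball (0 : Euc m) (1/α)) ⊆ closure (Zset H x) :=
              closure_mono (hH.ball_sub x hx)
          _ = Zset H x := (hH.closed x hx).closure_eq
      exact hcl hball
    have hval : ⟪-ξ, p⟫ = (1/α) * ‖p‖ := by
      rw [hξdef, neg_neg, real_inner_smul_left, real_inner_self_eq_norm_sq]
      field_simp
    rw [← hval]
    exact le_sigmaStar hH hx hξmem p

lemma smul_mem_interior_Zset (hH : SatisfiesH Ω H α) {x : Euc n} (hx : x ∈ Ω)
    {ξ : Euc m} (hξ : ξ ∈ Zset H x) {t : ℝ} (ht0 : 0 ≤ t) (ht1 : t < 1) :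
    t • ξ ∈ interior (Zset H x) := by
  have hα : 0 < α := hH.alpha_pos
  have h0 : (0 : Euc m) ∈ interior (Zset H x) :=
    interior_maximal (hH.ball_sub x hx) Metric.isOpen_ball (Metric.mem_ball_self (by positivity))
  have := (hH.convex x hx).combo_interior_closure_mem_interior h0
    (by rw [(hH.closed x hx).closure_eq]; exact hξ) (by linarith : (0:ℝ) < 1 - t) ht0
    (by ring)
  simpa using this

lemma H_neg_of_mem_interior (hH : SatisfiesH Ω H α) {x : Euc n} (hx : x ∈ Ω)
    {p : Euc m} (hp : p ∈ interior (Zset H x)) : H x p < 0 := by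
  have h1 : p ∈ Zset H x := interior_subset hp
  have h1 : H x p ≤ 0 := h1
  have h2 : p ∉ frontier (Zset H x) := by
    rw [(hH.closed x hx).frontier_eq]
    exact fun h => h.2 hp
  rw [hH.frontier_eq x hx] at h2
  exact lt_of_le_of_ne h1 h2

end sigmaHelpers

open scoped Pointwise

/-- **Lemma (Properties of `σ*`).** If `H` satisfies (H) on `Ω`, then for each `x ∈ Ω` the
map `p ↦ σ*(x,p)` is convex, positively 1-homogeneous and satisfies
`(1/α)‖p‖ ≤ σ*(x,p) ≤ α‖p‖`; moreover if `H` is upper (resp. lower) semicontinuous on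
`HΩ` then `x ↦ σ*(x,v)` is lower (resp. upper) semicontinuous on `Ω`. -/
theorem sigmaStar_subFinsler {n m k : ℕ} (G : CarnotGroup n m k) (Ω : Set (Euc n))
    (hΩo : IsOpen Ω)
    (H : Euc n → Euc m → ℝ) (α : ℝ) (hH : SatisfiesH Ω H α) :
    (∀ x ∈ Ω,
      ConvexOn ℝ (univ : Set (Euc m)) (sigmaStar H x) ∧
      (∀ c : ℝ, 0 ≤ c → ∀ p : Euc m, sigmaStar H x (c • p) = c * sigmaStar H x p) ∧
      (∀ p : Euc m, (1/α) * ‖p‖ ≤ sigmaStar H x p ∧ sigmaStar H x p ≤ α * ‖p‖)) ∧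
    (UpperSemicontinuousOn (fun q : Euc n × Euc m => H q.1 q.2) (Ω ×ˢ (univ : Set (Euc m))) →
      ∀ v : Euc m, LowerSemicontinuousOn (fun x => sigmaStar H x v) Ω) ∧
    (LowerSemicontinuousOn (fun q : Euc n × Euc m => H q.1 q.2) (Ω ×ˢ (univ : Set (Euc m))) →
      ∀ v : Euc m, UpperSemicontinuousOn (fun x => sigmaStar H x v) Ω) := by
  have hα : 0 < α := hH.alpha_pos
  refine ⟨?_, ?_, ?_⟩
  · -- pointwise properties
    intro x hx
    refine ⟨⟨convex_univ, ?_⟩, ?_, ?_⟩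
    · intro p _ q _ a b ha hb hab
      refine sigmaStar_le hH hx fun ξ hξ => ?_
      have : ⟪-ξ, a • p + b • q⟫ = a * ⟪-ξ, p⟫ + b * ⟪-ξ, q⟫ := by
        rw [inner_add_right, real_inner_smul_right, real_inner_smul_right]
      rw [this]
      exact add_le_add
        (mul_le_mul_of_nonneg_left (le_sigmaStar hH hx hξ p) ha)
        (mul_le_mul_of_nonneg_left (le_sigmaStar hH hx hξ q) hb)
    · intro c hc p
      rcases eq_or_lt_of_le hc with rfl | hc
      · have h0 : sigmaStar H x ((0:ℝ) • p) = 0 := by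
          refine le_antisymm ?_ ?_
          · have := sigmaStar_le_alpha hH hx ((0:ℝ) • p)
            simpa using this
          · simpa using sigmaStar_nonneg hH hx ((0:ℝ) • p)
        rw [h0, zero_mul]
      · refine le_antisymm ?_ ?_
        · refine sigmaStar_le hH hx fun ξ hξ => ?_
          rw [real_inner_smul_right]
          exact mul_le_mul_of_nonneg_left (le_sigmaStar hH hx hξ p) hc.le
        · rw [← le_div_iff₀' hc]
          refine sigmaStar_le hH hx fun ξ hξ => ?_
          rw [le_div_iff₀' hc, ← real_inner_smul_right]
          exact le_sigmaStar hH hx hξ _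
    · intro p
      exact ⟨alpha_le_sigmaStar hH hx p, sigmaStar_le_alpha hH hx p⟩
  · -- usc H ⇒ lsc σ*
    intro husc v x₀ hx₀ y hy
    rcases lt_or_ge y 0 with hy0 | hy0
    · filter_upwards [self_mem_nhdsWithin] with x hx
      exact lt_of_lt_of_le hy0 (sigmaStar_nonneg hH hx v)
    · obtain ⟨_, ⟨ξ, hξ, rfl⟩, hlt⟩ :=
        exists_lt_of_lt_csSup ((Zset_nonempty hH hx₀).image _) hy
      set c : ℝ := ⟪-ξ, v⟫ with hcdef
      have hc : 0 < c := lt_of_le_of_lt hy0 hlt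
      set t : ℝ := (y / c + 1) / 2 with htdef
      have hyc1 : y / c < 1 := (div_lt_one hc).2 hlt
      have ht0 : 0 ≤ t := by
        have : 0 ≤ y / c := div_nonneg hy0 hc.le
        rw [htdef]; linarith
      have ht1 : t < 1 := by rw [htdef]; linarith
      have hyt : y < t * c := by
        have : y / c < t := by rw [htdef]; linarith
        calc y = (y / c) * c := by field_simp
          _ < t * c := by exact mul_lt_mul_of_pos_right this hc
      have hneg : H x₀ (t • ξ) < 0 :=
        H_neg_of_mem_interior hH hx₀ (smul_mem_interior_Zset hH hx₀ hξ ht0 ht1)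
      have husc' := husc (x₀, t • ξ) ⟨hx₀, mem_univ _⟩ 0 hneg
      have hmap : Tendsto (fun x : Euc n => (x, t • ξ)) (𝓝[Ω] x₀)
          (𝓝[Ω ×ˢ (univ : Set (Euc m))] (x₀, t • ξ)) := by
        refine ContinuousWithinAt.tendsto_nhdsWithin ?_ ?_
        · exact (continuous_id.prodMk continuous_const).continuousWithinAt
        · exact fun x hx => ⟨hx, mem_univ _⟩
      filter_upwards [hmap.eventually husc', self_mem_nhdsWithin] with x hHx hxΩ
      have hmem : t • ξ ∈ Zset H x := le_of_lt hHx
      calc y < t * c := hyt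
        _ = ⟪-(t • ξ), v⟫ := by
            rw [← smul_neg, real_inner_smul_left]
        _ ≤ sigmaStar H x v := le_sigmaStar hH hxΩ hmem v
  · -- lsc H ⇒ usc σ*
    intro hlsc v x₀ hx₀ y hy
    rcases eq_or_ne v 0 with rfl | hv
    · have hzero : ∀ x ∈ Ω, sigmaStar H x (0 : Euc m) = 0 := by
        intro x hx
        refine le_antisymm ?_ (sigmaStar_nonneg hH hx 0)
        have := sigmaStar_le_alpha hH hx (0 : Euc m)
        simpa using this
      have hy0 : 0 < y := by simpa [hzero x₀ hx₀] using hy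
      filter_upwards [self_mem_nhdsWithin] with x hx
      rw [hzero x hx]; exact hy0
    · set s₀ : ℝ := sigmaStar H x₀ v with hs₀def
      have hvp : 0 < ‖v‖ := norm_pos_iff.2 hv
      have hs₀ : 0 < s₀ := lt_of_lt_of_le (by positivity) (alpha_le_sigmaStar hH hx₀ v)
      set ε : ℝ := (y - s₀) / (2 * s₀) with hεdef
      have hys : s₀ < y := hy
      have hε : 0 < ε := div_pos (by linarith) (by positivity)
      have hεs : ε * s₀ = (y - s₀) / 2 := by rw [hεdef]; field_simp
      have hεy : (1 + ε) * s₀ < y := by nlinarith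
      have h1ε : (0:ℝ) < 1 + ε := by linarith
      have hZint : Zset H x₀ ⊆ interior ((1 + ε) • Zset H x₀) := by
        intro ζ hζ
        have ht1 : 1 / (1 + ε) < 1 := by
          rw [div_lt_one h1ε]; linarith
        have hw : (1 / (1 + ε)) • ζ ∈ interior (Zset H x₀) :=
          smul_mem_interior_Zset hH hx₀ hζ (by positivity) ht1
        rw [interior_smul₀ h1ε.ne' _]
        refine ⟨_, hw, ?_⟩
        show (1 + ε) • ((1 / (1 + ε)) • ζ) = ζ
        rw [smul_smul, mul_one_div, div_self h1ε.ne', one_smul]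
      set C : Set (Euc m) := Metric.closedBall 0 α \ interior ((1 + ε) • Zset H x₀)
        with hCdef
      have hCcomp : IsCompact C := (isCompact_closedBall _ _).diff isOpen_interior
      have hnbhd : ∀ ξ ∈ C, ∃ U ∈ 𝓝[Ω] x₀, ∃ V ∈ 𝓝 ξ,
          ∀ x ∈ U, ∀ ζ ∈ V, 0 < H x ζ := by
        intro ξ hξ
        have hpos : 0 < H x₀ ξ := by
          by_contra h
          push_neg at h
          exact hξ.2 (hZint h)
        have hev := hlsc (x₀, ξ) ⟨hx₀, mem_univ _⟩ 0 hpos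
        rw [nhdsWithin_prod_eq, nhdsWithin_univ] at hev
        obtain ⟨U, hU, V, hV, hUV⟩ := Filter.mem_prod_iff.1 hev
        exact ⟨U, hU, V, hV, fun x hx ζ hζ => hUV (Set.mk_mem_prod hx hζ)⟩
      choose U hU V hV hUV using hnbhd
      obtain ⟨F, hF⟩ := hCcomp.elim_nhds_subcover' V hV
      have hU₀ : (⋂ ξ ∈ F, U ξ ξ.2) ∈ 𝓝[Ω] x₀ :=
        (Filter.biInter_finset_mem F).2 fun ξ _ => hU ξ ξ.2
      filter_upwards [hU₀, self_mem_nhdsWithin] with x hxU hxΩ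
      have hZx : Zset H x ⊆ (1 + ε) • Zset H x₀ := by
        intro ζ hζ
        by_contra hnot
        have hζC : ζ ∈ C := by
          refine ⟨Metric.ball_subset_closedBall (hH.sub_ball x hxΩ hζ),
            fun h => hnot (interior_subset h)⟩
        obtain ⟨ξ, hξF, hζV⟩ := Set.mem_iUnion₂.1 (hF hζC)
        have hx' : x ∈ U ξ ξ.2 := Set.mem_iInter₂.1 hxU ξ hξF
        have : H x ζ ≤ 0 := hζ
        exact absurd this (not_le.2 (hUV ξ ξ.2 x hx' ζ hζV))
      refine lt_of_le_of_lt ?_ hεy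
      refine sigmaStar_le hH hxΩ fun ζ hζ => ?_
      obtain ⟨w, hw, rfl⟩ := hZx hζ
      calc ⟪-((1 + ε) • w), v⟫ = (1 + ε) * ⟪-w, v⟫ := by
            rw [← smul_neg, real_inner_smul_left]
        _ ≤ (1 + ε) * s₀ :=
            mul_le_mul_of_nonneg_left (le_sigmaStar hH hx₀ hw v) h1ε.le
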